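/- Let n and r be integers with 2 ≤ r and r + 3 ≤ n. Then n! > π((r, 1^{n−r})) > π((r, 2, 1^{n−r−2})); equivalently, by the hook length formula, the irreducible character degrees of the symmetric group S_n satisfy 1 = χ^{(n)}(1) < χ^{(r,1^{n−r})}(1) < χ^{(r,2,1^{n−r−2})}(1). -/

import Mathlib

/-!
Deleting the first row of a partition does not change the hooks below it, and in the first row
the cells to the right of the second part have hook lengths `1, 2, …`. This gives
`π((r, 1^{n-r})) = n (r-1)! (n-r)!`, hence `n! = C · π((r, 1^{n-r}))` with
`C = (n-1).choose (r-1) ≥ n - 1 > 1`, and, with `D = (r-2)! (n-r) (n-r-2)!`,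
`π((r, 1^{n-r})) = n (r-1) (n-r-1) D` and `π((r, 2, 1^{n-r-2})) = (n-1) r D`.
As `r ≤ (r-1)(n-r-1)` and `n - 1 ≤ C`, this yields `(C + 1) · π((r, 2, 1^{n-r-2})) ≤ n!`,
which bounds the floor quotient `n! / π((r, 2, 1^{n-r-2}))` from below by `C + 1` without
knowing that `π((r, 2, 1^{n-r-2}))` divides `n!`.
-/

/-- The hook length of the cell in (0-based) row `i` and column `j` of the Young diagram of
the partition whose parts are given by the list `L`: with 1-based indices `(i+1, j+1)`,
this is `(λ_{i+1} - (j+1)) + (λ'_{j+1} - (i+1)) + 1`, where `λ'_{j+1}` is the number of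
parts of size at least `j+1`. -/
def hook (L : List ℕ) (i j : ℕ) : ℕ :=
  (L.getD i 0 - (j + 1)) + (L.countP (fun a => decide (j + 1 ≤ a)) - (i + 1)) + 1

/-- The product `π(λ)` of all hook lengths of the partition `λ` given by the list `L`. -/
def hookProd (L : List ℕ) : ℕ :=
  ∏ i ∈ Finset.range L.length, ∏ j ∈ Finset.range (L.getD i 0), hook L i j

/-- `γ ⋆ (x, y)`: add `x` to the first part of `γ` and append `y` trailing parts equal to `1`. -/
def starPartition (L : List ℕ) (x y : ℕ) : List ℕ :=
  (L.headD 0 + x) :: (L.tail ++ List.replicate y 1)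


open Finset Nat

theorem Nat.le_choose_of_pos_of_lt : ∀ {n k : ℕ}, 0 < k → k < n → n ≤ n.choose k
  | _ + 1, 1, _, _ => by simp
  | n + 1, k + 2, _, hk => by
    have ih := Nat.le_choose_of_pos_of_lt (n := n) (k := k + 1) (by omega) (by omega)
    have := Nat.choose_pos (n := n) (k := k + 1 + 1) (by omega)
    rw [Nat.choose_succ_succ']
    omega

theorem hookProd_pos (L : List ℕ) : 0 < hookProd L :=
  prod_pos fun _ _ => prod_pos fun _ _ => Nat.succ_pos _

theorem hook_cons_zero {a j : ℕ} (L : List ℕ) (hj : j < a) :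
    hook (a :: L) 0 j = a - j + L.countP (fun x => decide (j + 1 ≤ x)) := by
  simp only [hook, List.getD_cons_zero, List.countP_cons, Nat.succ_le_of_lt hj, decide_true,
    if_true]
  omega

theorem hook_cons_succ {a j : ℕ} (L : List ℕ) (i : ℕ) (hj : j < a) :
    hook (a :: L) (i + 1) j = hook L i j := by
  simp only [hook, List.getD_cons_succ, List.countP_cons, Nat.succ_le_of_lt hj, decide_true,
    if_true]
  omega

theorem hookProd_cons {a : ℕ} {L : List ℕ} (hL : ∀ x ∈ L, x ≤ a) :
    hookProd (a :: L) = (∏ j ∈ range a, hook (a :: L) 0 j) * hookProd L := by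
  rw [hookProd, List.length_cons, prod_range_succ', mul_comm, List.getD_cons_zero, hookProd]
  congr 1
  refine prod_congr rfl fun i hi => prod_congr rfl fun j hj => hook_cons_succ L i ?_
  have hrow : L.getD i 0 ∈ L := by
    rw [List.getD_eq_getElem _ _ (mem_range.mp hi)]
    exact List.getElem_mem _
  exact (mem_range.mp hj).trans_le (hL _ hrow)

theorem prod_range_sub_eq_factorial (n : ℕ) : ∏ i ∈ range n, (n - i) = n ! := by
  rw [← Nat.descFactorial_eq_prod_range, Nat.descFactorial_self]

theorem prod_hook_cons_zero_eq {a b : ℕ} {L : List ℕ} (hL : ∀ x ∈ L, x ≤ b)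
    (hb : b ≤ a) :
    ∏ j ∈ range a, hook (a :: L) 0 j = (∏ j ∈ range b, hook (a :: L) 0 j) * (a - b)! := by
  obtain ⟨c, rfl⟩ : ∃ c, a = b + c := ⟨a - b, by omega⟩
  rw [prod_range_add, Nat.add_sub_cancel_left, ← prod_range_sub_eq_factorial]
  refine congrArg _ (prod_congr rfl fun j hj => ?_)
  have hj := mem_range.mp hj
  have hcol : L.countP (fun x => decide (b + j + 1 ≤ x)) = 0 :=
    List.countP_eq_zero.mpr fun x hx => by have := hL x hx; simp only [decide_eq_true_eq]; omega
  rw [hook_cons_zero _ (by omega), hcol]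
  omega

theorem hookProd_replicate_one (m : ℕ) : hookProd (List.replicate m 1) = m ! := by
  induction m with
  | zero => rfl
  | succ m ih =>
    rw [List.replicate_succ, hookProd_cons (fun x hx => (List.eq_of_mem_replicate hx).le), ih,
      prod_range_one, hook_cons_zero _ one_pos, List.countP_replicate, Nat.factorial_succ]
    simp [add_comm]

theorem hookProd_cons_replicate_one {r : ℕ} (m : ℕ) (hr : 1 ≤ r) :
    hookProd (r :: List.replicate m 1) = (r + m) * (r - 1)! * m ! := by
  have hL : ∀ x ∈ List.replicate m 1, x ≤ 1 := fun x hx => (List.eq_of_mem_replicate hx).le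
  rw [hookProd_cons fun x hx => (hL x hx).trans hr, prod_hook_cons_zero_eq hL hr, prod_range_one,
    hook_cons_zero _ hr, List.countP_replicate, hookProd_replicate_one]
  simp

theorem hookProd_cons_two_replicate_one {r : ℕ} (k : ℕ) (hr : 2 ≤ r) :
    hookProd (r :: 2 :: List.replicate k 1) = (r + k + 1) * r * (r - 2)! * ((k + 2) * k !) := by
  obtain ⟨s, rfl⟩ : ∃ s, r = s + 2 := ⟨r - 2, by omega⟩
  have hL : ∀ x ∈ 2 :: List.replicate k 1, x ≤ 2 := by
    simp +contextual
  rw [hookProd_cons fun x hx => (hL x hx).trans hr, prod_hook_cons_zero_eq hL hr,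
    hookProd_cons_replicate_one k (by norm_num), prod_range_succ, prod_range_one,
    hook_cons_zero _ (by omega), hook_cons_zero _ (by omega)]
  have hcol₀ : (2 :: List.replicate k 1).countP (fun x => decide (0 + 1 ≤ x)) = k + 1 := by
    simp [List.countP_replicate]
  have hcol₁ : (2 :: List.replicate k 1).countP (fun x => decide (1 + 1 ≤ x)) = 1 := by
    simp [List.countP_replicate]
  rw [hcol₀, hcol₁, show s + 2 - 1 = s + 1 by omega, Nat.sub_zero, Nat.add_sub_cancel,
    Nat.factorial_one]
  ring

theorem factorial_eq_choose_mul_hookProd_cons_replicate_one {n r : ℕ} (hr : 1 ≤ r)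
    (hrn : r ≤ n) :
    n ! = (n - 1).choose (r - 1) * hookProd (r :: List.replicate (n - r) 1) := by
  rw [hookProd_cons_replicate_one _ hr, Nat.add_sub_cancel' hrn,
    ← Nat.mul_factorial_pred (by omega),
    ← Nat.choose_mul_factorial_mul_factorial (show r - 1 ≤ n - 1 by omega),
    show n - 1 - (r - 1) = n - r by omega]
  ring

theorem succ_choose_mul_hookProd_cons_two_le_factorial {n r : ℕ} (hr : 2 ≤ r)
    (hn : r + 3 ≤ n) :
    ((n - 1).choose (r - 1) + 1) * hookProd (r :: 2 :: List.replicate (n - r - 2) 1) ≤ n ! := by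
  rw [factorial_eq_choose_mul_hookProd_cons_replicate_one (r := r) (by omega) (by omega),
    hookProd_cons_two_replicate_one _ hr, hookProd_cons_replicate_one _ (by omega)]
  obtain ⟨s, rfl⟩ : ∃ s, r = s + 2 := ⟨r - 2, by omega⟩
  obtain ⟨k, rfl⟩ : ∃ k, n = s + k + 5 := ⟨n - s - 5, by omega⟩
  simp only [show s + k + 5 - 1 = s + k + 4 by omega, show s + k + 5 - (s + 2) = k + 3 by omega,
    Nat.add_sub_cancel, Nat.add_one_sub_one]
  set C := (s + k + 4).choose (s + 1)
  have hC : s + k + 4 ≤ C := Nat.le_choose_of_pos_of_lt (by omega) (by omega)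
  -- since `s + 2 ≤ (s + 1) * (k + 2)` and `hC`
  have key : (C + 1) * ((s + k + 4) * (s + 2)) ≤ C * ((s + k + 5) * (s + 1) * (k + 2)) := by
    nlinarith [Nat.zero_le (C * (s + k + 5) * (s * k + s + k))]
  set D := s ! * ((k + 3) * (k + 1)!)
  calc (C + 1) * ((s + 2 + (k + 1) + 1) * (s + 2) * s ! * ((k + 1 + 2) * (k + 1)!))
      = (C + 1) * ((s + k + 4) * (s + 2)) * D := by ring
    _ ≤ C * ((s + k + 5) * (s + 1) * (k + 2)) * D := Nat.mul_le_mul_right D key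
    _ = C * ((s + 2 + (k + 3)) * (s + 1)! * (k + 3)!) := by
      simp only [D, Nat.factorial_succ]
      ring

/-- For integers `2 ≤ r` and `r + 3 ≤ n`, one has
`n! > π((r, 1^{n-r})) > π((r, 2, 1^{n-r-2}))`; equivalently, by the hook length formula,
`1 = χ^{(n)}(1) < χ^{(r,1^{n-r})}(1) < χ^{(r,2,1^{n-r-2})}(1)`. -/
theorem stmt8 (n r : ℕ) (hr : 2 ≤ r) (hn : r + 3 ≤ n) :
    hookProd (r :: List.replicate (n - r) 1) < Nat.factorial n ∧
    hookProd (r :: 2 :: List.replicate (n - r - 2) 1) <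
      hookProd (r :: List.replicate (n - r) 1) ∧
    1 < Nat.factorial n / hookProd (r :: List.replicate (n - r) 1) ∧
    Nat.factorial n / hookProd (r :: List.replicate (n - r) 1) <
      Nat.factorial n / hookProd (r :: 2 :: List.replicate (n - r - 2) 1) := by
  set P₁ := hookProd (r :: List.replicate (n - r) 1)
  set P₂ := hookProd (r :: 2 :: List.replicate (n - r - 2) 1)
  set C := (n - 1).choose (r - 1)
  have hN : n ! = C * P₁ :=
    factorial_eq_choose_mul_hookProd_cons_replicate_one (by omega) (by omega)
  have hC : 1 < C := lt_of_lt_of_le (by omega) (Nat.le_choose_of_pos_of_lt (by omega) (by omega))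
  have hCP₂ : (C + 1) * P₂ ≤ n ! := succ_choose_mul_hookProd_cons_two_le_factorial hr hn
  have hP₁ : 0 < P₁ := hookProd_pos _
  have hP₂ : 0 < P₂ := hookProd_pos _
  have hdeg : n ! / P₁ = C := by rw [hN, Nat.mul_div_cancel _ hP₁]
  refine ⟨hN ▸ lt_mul_left hP₁ hC, ?_, hdeg ▸ hC, ?_⟩
  · rw [hN] at hCP₂
    exact Nat.lt_of_mul_lt_mul_left (a := C) (by nlinarith)
  · rw [hdeg]
    exact (Nat.le_div_iff_mul_le hP₂).mpr hCP₂
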